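/- arXiv:0907.4599 — 2 statements merged into one kernel-verified Lean document; each statement's English description precedes it below -/
import Mathlib

section
/- Fix a rational p/q. Assume there are ε₀ > 0 and v₀ > 0 such that for all t ∈ I(p/q): (i) setting m_t = inf_{x∈ℝ}(F_t^{∘q}(x) − x − p) and M_t = sup_{x∈ℝ}(F_t^{∘q}(x) − x − p), one has M_t − m_t ≤ ε₀, and (ii) for all x ∈ ℝ the partial derivative ∂F_t^{∘q}(x)/∂t is ≥ v₀. Then ℓ_{p/q} ≤ ε₀/v₀. -/
/-!
Since `p/q` is the translation number of `F_t` for `t ∈ [tmin, tmax]`, the continuous lift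
`F_tmin^q` has a point with `F_tmin^q(x₀) = x₀ + p`; bounded oscillation then gives
`F_tmin^q(x) ≥ x + p - ε₀` everywhere. Moving `t` from `tmin` to `tmax` pushes `F_t^q(x)` up by
at least `v₀ ℓ`, `ℓ = tmax - tmin`, so `F_tmax^q(x) ≥ x + p + v₀ ℓ - ε₀`, whence
`p = τ(F_tmax^q) ≥ p + v₀ ℓ - ε₀`.
-/

open Filter Set Topology

theorem sub_le_ciSup_sub_ciInf {ι : Type*} {φ : ι → ℝ} (ha : BddAbove (range φ))
    (hb : BddBelow (range φ)) (i j : ι) : φ i - φ j ≤ (⨆ k, φ k) - ⨅ k, φ k :=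
  sub_le_sub (le_ciSup ha i) (ciInf_le hb j)

theorem mul_sub_le_sub_of_pos_le_deriv {g : ℝ → ℝ} {a b C : ℝ} (hC : 0 < C)
    (hg : ∀ t ∈ Icc a b, C ≤ deriv g t) (hab : a ≤ b) : C * (b - a) ≤ g b - g a := by
  have hdiff : DifferentiableOn ℝ g (Icc a b) := fun t ht =>
    (differentiableAt_of_deriv_ne_zero (hC.trans_le (hg t ht)).ne').differentiableWithinAt
  exact (convex_Icc a b).mul_sub_le_image_sub_of_le_deriv hdiff.continuousOn
    (hdiff.mono interior_subset) (fun t ht => hg t (interior_subset ht))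
    a (left_mem_Icc.2 hab) b (right_mem_Icc.2 hab) hab

namespace CircleDeg1Lift

def addConst (f : CircleDeg1Lift) (t : ℝ) : CircleDeg1Lift where
  toFun x := f x + t
  monotone' := f.monotone.add_const t
  map_add_one' x := by simp [add_right_comm]

section

variable (f : CircleDeg1Lift)

theorem bddAbove_range_map_sub_sub (c : ℝ) : BddAbove (range fun x => f x - x - c) :=
  ⟨f.translationNumber + 1 - c, by
    rintro _ ⟨x, rfl⟩
    linarith [f.map_lt_add_translationNumber_add_one x]⟩

theorem bddBelow_range_map_sub_sub (c : ℝ) : BddBelow (range fun x => f x - x - c) :=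
  ⟨f.translationNumber - 1 - c, by
    rintro _ ⟨x, rfl⟩
    linarith [f.translationNumber_le_ceil_sub x, Int.ceil_lt_add_one (f x - x)]⟩

theorem le_mul_translationNumber_of_add_le_iterate {n : ℕ} {z : ℝ}
    (hz : ∀ x, x + z ≤ f^[n] x) : z ≤ n * f.translationNumber := by
  rw [← translationNumber_pow]
  exact (f ^ n).le_translationNumber_of_add_le (by simpa only [coe_pow] using hz)

theorem add_sub_le_iterate_of_translationNumber_eq (hf : Continuous f)
    {p : ℤ} {q : ℕ} (hq : 0 < q) (hτ : f.translationNumber = p / q) {ε : ℝ}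
    (hosc : (⨆ x, f^[q] x - x - p) - (⨅ x, f^[q] x - x - p) ≤ ε) (x : ℝ) :
    x + p - ε ≤ f^[q] x := by
  obtain ⟨x₀, hx₀⟩ := (f.translationNumber_eq_rat_iff hf hq).1 hτ
  rw [coe_pow] at hx₀
  have hosc' := sub_le_ciSup_sub_ciInf ((f ^ q).bddAbove_range_map_sub_sub p)
    ((f ^ q).bddBelow_range_map_sub_sub p) x₀ x
  simp only [coe_pow] at hosc'
  linarith

end

end CircleDeg1Lift

theorem length_interval_le_of_osc_le_of_deriv_ge_general
    (F : ℝ → ℝ)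
    (hFanal : ∀ x : ℝ, AnalyticAt ℝ F x)
    (hFmono : StrictMono F)
    (hFper : ∀ x : ℝ, F (x + 1) = F x + 1)
    -- translation numbers of the translated family `F_t = F + t`
    (T : ℝ → ℝ)
    (hT : ∀ t x : ℝ, Tendsto (fun n : ℕ => ((fun y => F y + t)^[n] x - x) / n)
      atTop (𝓝 (T t)))
    -- a rational number `p/q` in lowest terms
    (p : ℤ) (q : ℕ) (hq : 0 < q)
    -- `I(p/q)` is the closed interval `[tmin, tmax]`
    (tmin tmax : ℝ) (hle : tmin ≤ tmax)
    (hI : {t : ℝ | T t = (p : ℝ) / (q : ℝ)} = Set.Icc tmin tmax)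
    (ε₀ v₀ : ℝ) (hv₀ : 0 < v₀)
    -- (i) the oscillation `M_t - m_t` of `x ↦ F_t^{∘q}(x) - x - p` is at most `ε₀`
    (hosc : ∀ t ∈ Set.Icc tmin tmax,
      (⨆ x : ℝ, ((fun y => F y + t)^[q] x - x - (p : ℝ))) -
        (⨅ x : ℝ, ((fun y => F y + t)^[q] x - x - (p : ℝ))) ≤ ε₀)
    -- (ii) the `t`-derivative of `F_t^{∘q}(x)` is at least `v₀`
    (hderiv : ∀ t ∈ Set.Icc tmin tmax, ∀ x : ℝ,
      v₀ ≤ deriv (fun s : ℝ => (fun y : ℝ => F y + s)^[q] x) t) :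
    tmax - tmin ≤ ε₀ / v₀ := by
  let f : CircleDeg1Lift := ⟨⟨F, hFmono.monotone⟩, hFper⟩
  have hF : Continuous F := continuous_iff_continuousAt.2 fun x => (hFanal x).continuousAt
  have hf : ∀ t, ⇑(f.addConst t) = fun y => F y + t := fun t => rfl
  have hτ : ∀ t ∈ Icc tmin tmax, (f.addConst t).translationNumber = p / q := fun t ht => by
    have hTt : T t = (f.addConst t).translationNumber := tendsto_nhds_unique (hT t 0)
      (by simpa only [CircleDeg1Lift.coe_pow, hf] using (f.addConst t).tendsto_translationNumber 0)
    rw [← hTt]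
    exact (hI ▸ ht : t ∈ {t : ℝ | T t = p / q})
  have hmin : tmin ∈ Icc tmin tmax := left_mem_Icc.2 hle
  have hmax : tmax ∈ Icc tmin tmax := right_mem_Icc.2 hle
  have hlow : ∀ x, x + p - ε₀ ≤ (fun y => F y + tmin)^[q] x :=
    (f.addConst tmin).add_sub_le_iterate_of_translationNumber_eq (hF.add continuous_const)
      hq (hτ tmin hmin) (hosc tmin hmin)
  have hpush : ∀ x,
      v₀ * (tmax - tmin) ≤ (fun y => F y + tmax)^[q] x - (fun y => F y + tmin)^[q] x :=
    fun x => mul_sub_le_sub_of_pos_le_deriv hv₀ (fun t ht => hderiv t ht x) hle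
  have hτmax := (f.addConst tmax).le_mul_translationNumber_of_add_le_iterate
    (n := q) (z := p + v₀ * (tmax - tmin) - ε₀) fun x => by rw [hf]; linarith [hlow x, hpush x]
  rw [hτ tmax hmax, mul_div_cancel₀ _ (Nat.cast_ne_zero.2 hq.ne')] at hτmax
  rw [le_div_iff₀' hv₀]
  linarith

/-- Lemma 1 of the paper: if on the interval `I(p/q)` the oscillation of
`x ↦ F_t^{∘q}(x) - x - p` is at most `ε₀` and the `t`-derivative of
`F_t^{∘q}(x)` is at least `v₀`, then the length of `I(p/q)` is at most `ε₀/v₀`. -/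
theorem length_interval_le_of_osc_le_of_deriv_ge
    (F : ℝ → ℝ)
    (hFanal : ∀ x : ℝ, AnalyticAt ℝ F x)
    (hFmono : StrictMono F)
    (hFbij : Function.Bijective F)
    (hFderiv : ∀ x : ℝ, 0 < deriv F x)
    (hFper : ∀ x : ℝ, F (x + 1) = F x + 1)
    -- translation numbers of the translated family `F_t = F + t`
    (T : ℝ → ℝ)
    (hT : ∀ t x : ℝ, Tendsto (fun n : ℕ => ((fun y => F y + t)^[n] x - x) / n)
      atTop (𝓝 (T t)))
    -- a rational number `p/q` in lowest terms
    (p : ℤ) (q : ℕ) (hq : 0 < q) (hcop : Nat.Coprime p.natAbs q)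
    -- `I(p/q)` is the closed interval `[tmin, tmax]`
    (tmin tmax : ℝ) (hle : tmin ≤ tmax)
    (hI : {t : ℝ | T t = (p : ℝ) / (q : ℝ)} = Set.Icc tmin tmax)
    (ε₀ v₀ : ℝ) (hε₀ : 0 < ε₀) (hv₀ : 0 < v₀)
    -- (i) the oscillation `M_t - m_t` of `x ↦ F_t^{∘q}(x) - x - p` is at most `ε₀`
    (hosc : ∀ t ∈ Set.Icc tmin tmax,
      (⨆ x : ℝ, ((fun y => F y + t)^[q] x - x - (p : ℝ))) -
        (⨅ x : ℝ, ((fun y => F y + t)^[q] x - x - (p : ℝ))) ≤ ε₀)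
    -- (ii) the `t`-derivative of `F_t^{∘q}(x)` is at least `v₀`
    (hderiv : ∀ t ∈ Set.Icc tmin tmax, ∀ x : ℝ,
      v₀ ≤ deriv (fun s : ℝ => (fun y : ℝ => F y + s)^[q] x) t) :
    tmax - tmin ≤ ε₀ / v₀ :=
  length_interval_le_of_osc_le_of_deriv_ge_general F hFanal hFmono hFper T hT p q hq tmin tmax hle
    hI ε₀ v₀ hv₀ hosc hderiv
end

section
/- Fix τ' < τ'' < τ, set S' = Ψ_F(S(τ')), choose parameters t_n ∈ I(p_n/q_n), and let H_n = Φ_F ∘ F_{t_n} ∘ Ψ_F on S(τ'). Then for all n large enough and for all k ≤ q_n, the iterate H_n^{∘k} is defined on S(τ') with H_n^{∘k}(S(τ')) ⊂ S(τ). Moreover sup_{w ∈ S(τ')} |H_n^{∘q_n}(w) − w − q_nθ| → 0 as n → ∞. -/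
/-! For `t = 0` the conjugated map `Φc ∘ (Fc + t) ∘ Ψ` is the translation by `θ`. The inverse
`Φc` is holomorphic on the open set `Ψ(S(τ))` and commutes with `z ↦ z + 1`, so it is Lipschitz
near the compact image of a fundamental domain of `S(τ'')`; hence adding `t` moves each step by
at most `M |t|`, uniformly on `S(τ'')`. After `k ≤ q_n` steps the orbit is within
`q_n M |t_n| ≤ M C₃ / q_n` of the translated point, which keeps it in `S(τ'')` and tends to `0`.

Holomorphy of `Φc` needs `Ψ' ≠ 0`: the zeros of `Ψ'` are preserved by `z ↦ z + θ`
(differentiate `Fc ∘ Ψ = Ψ (· + θ)`) and by `z ↦ z + 1`, so for irrational `θ` they would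
accumulate, forcing `Ψ` to be constant. -/

open Filter Real Set Topology

/-- The open horizontal strip `S(τ) = {z ∈ ℂ : |Im z| < τ}`. -/
def Strip (τ : ℝ) : Set ℂ := {z : ℂ | |z.im| < τ}

lemma isOpen_strip (τ : ℝ) : IsOpen (Strip τ) :=
  isOpen_lt (continuous_abs.comp Complex.continuous_im) continuous_const

lemma convex_strip (τ : ℝ) : Convex ℝ (Strip τ) := by
  have : Strip τ = Complex.im ⁻¹' Ioo (-τ) τ := by ext z; simp [Strip, abs_lt]
  rw [this]
  exact (convex_Ioo (-τ) τ).linear_preimage Complex.imLm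

lemma strip_mono {τ₁ τ₂ : ℝ} (h : τ₁ ≤ τ₂) : Strip τ₁ ⊆ Strip τ₂ :=
  fun _ hz => lt_of_lt_of_le hz h

lemma mem_strip_add_of_norm_sub_le {τ b : ℝ} {u w x : ℂ} (hx : x.im = 0) (hw : w ∈ Strip τ)
    (h : ‖u - w - x‖ ≤ b) : u ∈ Strip (τ + b) := by
  have hu : u.im = w.im + (u - w - x).im := by simp [hx]
  calc |u.im| ≤ |w.im| + |(u - w - x).im| := hu ▸ abs_add_le _ _
    _ < τ + b := add_lt_add_of_lt_of_le hw ((Complex.abs_im_le_norm _).trans h)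

lemma Irrational.exists_tendsto_nat_mul_sub_round {θ : ℝ} (hθ : Irrational θ) :
    ∃ k : ℕ → ℕ, Tendsto (fun n => (k n : ℝ) * θ - round ((k n : ℝ) * θ)) atTop (𝓝[≠] 0) := by
  choose k hk_pos _ hk using fun n : ℕ => Real.exists_nat_abs_mul_sub_round_le θ n.succ_pos
  refine ⟨k, tendsto_nhdsWithin_iff.2 ⟨?_, .of_forall fun n => ?_⟩⟩
  · refine squeeze_zero_norm (a := fun n : ℕ => 1 / ((n : ℝ) + 1)) (fun n => (hk n).trans ?_)
      tendsto_one_div_add_atTop_nhds_zero_nat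
    exact one_div_le_one_div_of_le (by positivity) (by push_cast; linarith)
  · exact sub_ne_zero.2 ((hθ.natCast_mul (hk_pos n).ne').ne_int _)

lemma deriv_add_eq_zero_of_comp_eq {𝕜 : Type*} [NontriviallyNormedField 𝕜] {f g : 𝕜 → 𝕜}
    {c z : 𝕜} (hf : DifferentiableAt 𝕜 f z) (hg : DifferentiableAt 𝕜 g (f z))
    (hfg : (fun w => f (w + c)) =ᶠ[𝓝 z] g ∘ f) (h : deriv f z = 0) : deriv f (z + c) = 0 := by
  rw [← deriv_comp_add_const, hfg.deriv_eq, deriv_comp z hg hf, h, mul_zero]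

lemma IsCompact.exists_norm_sub_le_of_differentiableOn {f : ℂ → ℂ} {K Ω : Set ℂ}
    (hK : IsCompact K) (hΩ : IsOpen Ω) (hKΩ : K ⊆ Ω) (hf : DifferentiableOn ℂ f Ω) :
    ∃ M δ : ℝ, 0 ≤ M ∧ 0 < δ ∧
      ∀ w ∈ K, ∀ s : ℂ, ‖s‖ ≤ δ → w + s ∈ Ω ∧ ‖f (w + s) - f w‖ ≤ M * ‖s‖ := by
  obtain ⟨δ, hδ, hδΩ⟩ := hK.exists_thickening_subset_open hΩ hKΩ
  have hK'Ω : Metric.cthickening (δ / 2) K ⊆ Ω :=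
    (Metric.cthickening_subset_thickening' hδ (half_lt_self hδ) K).trans hδΩ
  obtain ⟨M, hM⟩ := hK.cthickening.exists_bound_of_continuousOn
    ((hf.analyticOnNhd hΩ).deriv.continuousOn.mono hK'Ω)
  refine ⟨max M 0, δ / 2, le_max_right _ _, half_pos hδ, fun w hw s hs => ?_⟩
  have hball : Metric.closedBall w (δ / 2) ⊆ Metric.cthickening (δ / 2) K :=
    Metric.closedBall_subset_cthickening hw _
  have hws : w + s ∈ Metric.closedBall w (δ / 2) := by simpa using hs
  refine ⟨hK'Ω (hball hws), ?_⟩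
  simpa using (convex_closedBall w (δ / 2)).norm_image_sub_le_of_norm_deriv_le
    (fun x hx => hf.differentiableAt (hΩ.mem_nhds (hK'Ω (hball hx))))
    (fun x hx => (hM x (hball hx)).trans (le_max_left _ _))
    (Metric.mem_closedBall_self (half_pos hδ).le) hws

lemma norm_iterate_sub_le {h : ℂ → ℂ} {θ ε ρ τ' : ℝ} (hε : 0 ≤ ε)
    (hh : ∀ u ∈ Strip ρ, ‖h u - u - θ‖ ≤ ε) {w : ℂ} (hw : w ∈ Strip τ') :
    ∀ k : ℕ, k * ε ≤ ρ - τ' → ‖h^[k] w - w - k * θ‖ ≤ k * ε := by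
  intro k
  induction k with
  | zero => simp
  | succ k ih =>
    intro hk
    push_cast at hk ⊢
    have hu := ih (by linarith)
    have hmem : h^[k] w ∈ Strip ρ :=
      strip_mono (by linarith) (mem_strip_add_of_norm_sub_le (by simp) hw hu)
    rw [Function.iterate_succ_apply',
      show h (h^[k] w) - w - (k + 1) * θ = (h (h^[k] w) - h^[k] w - θ) + (h^[k] w - w - k * θ)
        by ring]
    linarith [norm_add_le (h (h^[k] w) - h^[k] w - θ) (h^[k] w - w - k * θ), hh _ hmem]

lemma tendstoUniformlyOn_zero_of_norm_le {ι α E : Type*} [SeminormedAddCommGroup E]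
    {l : Filter ι} {f : ι → α → E} {s : Set α} {b : ι → ℝ} (hb : Tendsto b l (𝓝 0))
    (hf : ∀ᶠ n in l, ∀ x ∈ s, ‖f n x‖ ≤ b n) : TendstoUniformlyOn f 0 l s := by
  refine Metric.tendstoUniformlyOn_iff.2 fun ε hε => ?_
  filter_upwards [hf, hb.eventually (gt_mem_nhds hε)] with n hn hbn x hx
  simpa [dist_eq_norm] using (hn x hx).trans_lt hbn

lemma tendsto_natCast_mul_abs_of_abs_le_div_sq {t : ℕ → ℝ} {q : ℕ → ℕ} {C : ℝ}
    (hq : Tendsto q atTop atTop) (ht : ∀ n, |t n| ≤ C / (q n : ℝ) ^ 2) :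
    Tendsto (fun n => (q n : ℝ) * |t n|) atTop (𝓝 0) := by
  have hq' : Tendsto (fun n => (q n : ℝ)) atTop atTop := tendsto_natCast_atTop_atTop.comp hq
  refine squeeze_zero (fun n => by positivity) (fun n => ?_)
    (tendsto_const_nhds (x := C) |>.div_atTop hq')
  calc (q n : ℝ) * |t n| ≤ q n * (C / (q n : ℝ) ^ 2) := by gcongr; exact ht n
    _ = C / q n := by
      rcases eq_or_ne (q n : ℝ) 0 with h | h
      · simp [h]
      · field_simp

section HermanStrip

variable {τ θ : ℝ} {Ψ Φc Fc : ℂ → ℂ}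

lemma map_add_intCast_of_map_add_one (hΨper : ∀ z ∈ Strip τ, Ψ (z + 1) = Ψ z + 1) (m : ℤ)
    {z : ℂ} (hz : z ∈ Strip τ) : Ψ (z + m) = Ψ z + m := by
  have hnat : ∀ n : ℕ, ∀ z ∈ Strip τ, Ψ (z + n) = Ψ z + n := by
    intro n
    induction n with
    | zero => simp
    | succ n ih =>
      intro z hz
      have h1 := hΨper (z + n) (by simpa [Strip] using hz)
      push_cast
      rw [← add_assoc, h1, ih z hz, add_assoc]
  obtain ⟨n, rfl | rfl⟩ := m.eq_nat_or_neg
  · exact_mod_cast hnat n z hz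
  · have hzn : z + ((-n : ℤ) : ℂ) ∈ Strip τ := by simpa [Strip] using hz
    have := hnat n _ hzn
    push_cast at this ⊢
    rw [neg_add_cancel_right] at this
    linear_combination -this

lemma map_one_ne_map_zero (hτ : 0 < τ) (hΨper : ∀ z ∈ Strip τ, Ψ (z + 1) = Ψ z + 1) :
    Ψ 1 ≠ Ψ 0 := by
  have h := hΨper 0 (by simpa [Strip] using hτ)
  rw [zero_add] at h
  simp [h]

lemma isOpen_image_strip (hτ : 0 < τ) (hΨdiff : DifferentiableOn ℂ Ψ (Strip τ))
    (hΨper : ∀ z ∈ Strip τ, Ψ (z + 1) = Ψ z + 1) : IsOpen (Ψ '' Strip τ) := by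
  refine ((hΨdiff.analyticOnNhd (isOpen_strip τ)).is_constant_or_isOpen
    (convex_strip τ).isPreconnected).resolve_left ?_ _ subset_rfl (isOpen_strip τ)
  rintro ⟨w, hw⟩
  exact map_one_ne_map_zero hτ hΨper <|
    (hw 1 (by simpa [Strip] using hτ)).trans (hw 0 (by simpa [Strip] using hτ)).symm

lemma deriv_add_intCast (hΨper : ∀ z ∈ Strip τ, Ψ (z + 1) = Ψ z + 1) {z : ℂ}
    (hz : z ∈ Strip τ) (m : ℤ) : deriv Ψ (z + m) = deriv Ψ z := by
  have h : (fun w => Ψ (w + m)) =ᶠ[𝓝 z] fun w => Ψ w + m := by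
    filter_upwards [(isOpen_strip τ).mem_nhds hz] with w hw
    exact map_add_intCast_of_map_add_one hΨper m hw
  rw [← deriv_comp_add_const, h.deriv_eq, deriv_add_const]

lemma frequently_deriv_eq_zero_of_conj_translate (hτ : 0 < τ) (hirr : Irrational θ)
    (hΨdiff : DifferentiableOn ℂ Ψ (Strip τ)) (hΨper : ∀ z ∈ Strip τ, Ψ (z + 1) = Ψ z + 1)
    (hFcdiff : DifferentiableOn ℂ Fc (Ψ '' Strip τ))
    (hFclin : ∀ z ∈ Strip τ, Fc (Ψ z) = Ψ (z + (θ : ℂ))) {z₀ : ℂ} (hz₀ : z₀ ∈ Strip τ)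
    (h₀ : deriv Ψ z₀ = 0) : ∃ᶠ z in 𝓝[≠] z₀, deriv Ψ z = 0 := by
  have hS := isOpen_strip τ
  have hΩ := isOpen_image_strip hτ hΨdiff hΨper
  have horbit : ∀ k : ℕ, deriv Ψ (z₀ + k * θ) = 0 := by
    intro k
    induction k with
    | zero => simpa using h₀
    | succ k ih =>
      have hz : z₀ + k * θ ∈ Strip τ := by simpa [Strip] using hz₀
      have hrot : (fun w => Ψ (w + θ)) =ᶠ[𝓝 (z₀ + k * θ)] Fc ∘ Ψ := by
        filter_upwards [hS.mem_nhds hz] with w hw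
        exact (hFclin w hw).symm
      have := deriv_add_eq_zero_of_comp_eq (hΨdiff.differentiableAt (hS.mem_nhds hz))
        (hFcdiff.differentiableAt (hΩ.mem_nhds (mem_image_of_mem Ψ hz))) hrot ih
      push_cast
      rwa [add_one_mul, ← add_assoc]
  obtain ⟨k, hk⟩ := hirr.exists_tendsto_nat_mul_sub_round
  have hmap : Tendsto (fun x : ℝ => z₀ + x) (𝓝[≠] 0) (𝓝[≠] z₀) := by
    refine tendsto_nhdsWithin_iff.2 ⟨?_, eventually_nhdsWithin_of_forall fun x hx => ?_⟩
    · simpa using ((by fun_prop : Continuous fun x : ℝ => z₀ + x).tendsto 0).mono_left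
        nhdsWithin_le_nhds
    · simpa using hx
  refine (hmap.comp hk).frequently (.of_forall fun n => ?_)
  have hz : z₀ + (k n : ℝ) * θ ∈ Strip τ := by simpa [Strip] using hz₀
  have := deriv_add_intCast hΨper (by simpa using hz) (-round ((k n : ℝ) * θ))
  simp only [Function.comp_apply]
  push_cast at this ⊢
  rwa [← sub_eq_add_neg, add_sub_assoc, horbit] at this

lemma deriv_ne_zero_of_conj_translate (hτ : 0 < τ) (hirr : Irrational θ)
    (hΨdiff : DifferentiableOn ℂ Ψ (Strip τ)) (hΨper : ∀ z ∈ Strip τ, Ψ (z + 1) = Ψ z + 1)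
    (hFcdiff : DifferentiableOn ℂ Fc (Ψ '' Strip τ))
    (hFclin : ∀ z ∈ Strip τ, Fc (Ψ z) = Ψ (z + (θ : ℂ))) {z : ℂ} (hz : z ∈ Strip τ) :
    deriv Ψ z ≠ 0 := by
  intro h
  have hS := isOpen_strip τ
  have hzero : EqOn (deriv Ψ) 0 (Strip τ) :=
    (hΨdiff.analyticOnNhd hS).deriv.eqOn_zero_of_preconnected_of_frequently_eq_zero
      (convex_strip τ).isPreconnected hz
      (frequently_deriv_eq_zero_of_conj_translate hτ hirr hΨdiff hΨper hFcdiff hFclin hz h)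
  exact map_one_ne_map_zero hτ hΨper <| hS.is_const_of_deriv_eq_zero
    (convex_strip τ).isPreconnected hΨdiff hzero (by simpa [Strip] using hτ)
    (by simpa [Strip] using hτ)

lemma differentiableOn_image_of_leftInverse (hΨdiff : DifferentiableOn ℂ Ψ (Strip τ))
    (hΨ' : ∀ z ∈ Strip τ, deriv Ψ z ≠ 0) (hΦcΨ : ∀ z ∈ Strip τ, Φc (Ψ z) = z) :
    DifferentiableOn ℂ Φc (Ψ '' Strip τ) := by
  rintro _ ⟨z, hz, rfl⟩
  have hz' := (isOpen_strip τ).mem_nhds hz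
  have hinv : ∀ᶠ w in 𝓝 z, Φc (Ψ w) = w := eventually_of_mem hz' hΦcΨ
  exact ((hΨdiff.analyticAt hz').hasStrictDerivAt.to_local_left_inverse (hΨ' z hz)
    hinv).hasDerivAt.differentiableAt.differentiableWithinAt

lemma exists_norm_inverse_add_sub_le {τ'' : ℝ} (hτ''τ : τ'' < τ)
    (hΨdiff : DifferentiableOn ℂ Ψ (Strip τ)) (hΨper : ∀ z ∈ Strip τ, Ψ (z + 1) = Ψ z + 1)
    (hΩ : IsOpen (Ψ '' Strip τ)) (hΦcdiff : DifferentiableOn ℂ Φc (Ψ '' Strip τ))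
    (hΦcΨ : ∀ z ∈ Strip τ, Φc (Ψ z) = z) :
    ∃ M δ : ℝ, 0 ≤ M ∧ 0 < δ ∧
      ∀ z ∈ Strip τ'', ∀ s : ℂ, ‖s‖ ≤ δ → ‖Φc (Ψ z + s) - z‖ ≤ M * ‖s‖ := by
  set Q := Icc (0 : ℝ) 1 ×ℂ Icc (-τ'') τ''
  have hQ : Q ⊆ Strip τ := fun z hz =>
    (abs_le.2 (Complex.mem_reProdIm.1 hz).2).trans_lt hτ''τ
  obtain ⟨M, δ, hM, hδ, hK⟩ := ((isCompact_Icc.reProdIm isCompact_Icc).image_of_continuousOn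
    (hΨdiff.continuousOn.mono hQ)).exists_norm_sub_le_of_differentiableOn hΩ
    (image_mono hQ) hΦcdiff
  refine ⟨M, δ, hM, hδ, fun z hz s hs => ?_⟩
  set m := ⌊z.re⌋
  have hzQ : z - m ∈ Q := by
    refine Complex.mem_reProdIm.2 ⟨?_, abs_le.1 (by simpa using hz.le)⟩
    have hre : (z - m).re = Int.fract z.re := by simp [m, Int.self_sub_floor]
    exact hre ▸ ⟨Int.fract_nonneg z.re, (Int.fract_lt_one z.re).le⟩
  obtain ⟨⟨y, hy, hys⟩, hbound⟩ := hK _ (mem_image_of_mem Ψ hzQ) s hs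
  have hΨz : Ψ z = Ψ (z - m) + m := by
    rw [← map_add_intCast_of_map_add_one hΨper m (hQ hzQ), sub_add_cancel]
  have hΦc : Φc (Ψ z + s) = Φc (Ψ (z - m) + s) + m := by
    rw [hΨz, add_right_comm, ← hys, ← map_add_intCast_of_map_add_one hΨper m hy,
      hΦcΨ _ (by simpa [Strip] using hy), hΦcΨ _ hy]
  rw [hΦcΨ _ (hQ hzQ)] at hbound
  rwa [hΦc, show Φc (Ψ (z - m) + s) + m - z = Φc (Ψ (z - m) + s) - (z - m) by ring]

lemma exists_norm_conj_translate_sub_le {τ'' : ℝ} (hτ : 0 < τ) (hτ''τ : τ'' < τ)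
    (hirr : Irrational θ) (hΨdiff : DifferentiableOn ℂ Ψ (Strip τ))
    (hΨper : ∀ z ∈ Strip τ, Ψ (z + 1) = Ψ z + 1) (hΦcΨ : ∀ z ∈ Strip τ, Φc (Ψ z) = z)
    (hFcdiff : DifferentiableOn ℂ Fc (Ψ '' Strip τ))
    (hFclin : ∀ z ∈ Strip τ, Fc (Ψ z) = Ψ (z + (θ : ℂ))) :
    ∃ M δ : ℝ, 0 ≤ M ∧ 0 < δ ∧ ∀ t : ℝ, |t| ≤ δ →
      ∀ u ∈ Strip τ'', ‖Φc (Fc (Ψ u) + t) - u - θ‖ ≤ M * |t| := by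
  have hΦcdiff := differentiableOn_image_of_leftInverse hΨdiff
    (fun z hz => deriv_ne_zero_of_conj_translate hτ hirr hΨdiff hΨper hFcdiff hFclin hz) hΦcΨ
  obtain ⟨M, δ, hM, hδ, h⟩ := exists_norm_inverse_add_sub_le hτ''τ hΨdiff hΨper
    (isOpen_image_strip hτ hΨdiff hΨper) hΦcdiff hΦcΨ
  refine ⟨M, δ, hM, hδ, fun t ht u hu => ?_⟩
  rw [hFclin u (strip_mono hτ''τ.le hu), sub_sub]
  simpa using h (u + θ) (by simpa [Strip] using hu) t (by simpa using ht)

end HermanStrip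

theorem conjugated_iterates_defined_and_close_to_translation_general
    (θ : ℝ) (hirr : Irrational θ)
    -- Herman strip of modulus `2τ`
    (τ : ℝ) (hτ : 0 < τ)
    (Ψ : ℂ → ℂ)
    (hΨdiff : DifferentiableOn ℂ Ψ (Strip τ))
    (hΨper : ∀ z ∈ Strip τ, Ψ (z + 1) = Ψ z + 1)
    -- the complex extension `Φc` of `Φ_F`, inverse of `Ψ` on the Herman strip
    (Φc : ℂ → ℂ)
    (hΦcΨ : ∀ z ∈ Strip τ, Φc (Ψ z) = z)
    (Fc : ℂ → ℂ)
    (hFcdiff : DifferentiableOn ℂ Fc (Ψ '' Strip τ))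
    (hFclin : ∀ z ∈ Strip τ, Fc (Ψ z) = Ψ (z + (θ : ℂ)))
    -- `τ' < τ'' < τ`
    (τ' τ'' : ℝ) (hτ'τ'' : τ' < τ'') (hτ''τ : τ'' < τ)
    -- continued fraction convergents `p_n/q_n` of `θ`
    (pn : ℕ → ℤ) (qn : ℕ → ℕ)
    (hqtend : Tendsto qn atTop atTop)
    (hconv : ∀ n, |θ - (pn n : ℝ) / (qn n : ℝ)| ≤ 1 / (qn n : ℝ) ^ 2)
    -- parameters `t_n ∈ I(p_n/q_n)`, with the bound coming from Herman's theorem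
    (t : ℕ → ℝ)
    (C₃ : ℝ) (hC₃ : 0 < C₃)
    (htbound : ∀ n, |t n| ≤ C₃ * |θ - (pn n : ℝ) / (qn n : ℝ)|) :
    (∃ N : ℕ, ∀ n ≥ N, ∀ k ≤ qn n,
      Set.MapsTo ((fun w : ℂ => Φc (Fc (Ψ w) + ((t n : ℝ) : ℂ)))^[k])
        (Strip τ') (Strip τ))
    ∧ TendstoUniformlyOn
        (fun n w => (fun w : ℂ => Φc (Fc (Ψ w) + ((t n : ℝ) : ℂ)))^[qn n] w
          - w - (qn n : ℂ) * (θ : ℂ))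
        (fun _ => 0) atTop (Strip τ') := by
  obtain ⟨M, δ, hM, hδ, hH⟩ :=
    exists_norm_conj_translate_sub_le hτ hτ''τ hirr hΨdiff hΨper hΦcΨ hFcdiff hFclin
  have ht : ∀ n, |t n| ≤ C₃ / (qn n : ℝ) ^ 2 := fun n =>
    (htbound n).trans (by simpa [div_eq_mul_inv] using mul_le_mul_of_nonneg_left (hconv n) hC₃.le)
  have hqt := tendsto_natCast_mul_abs_of_abs_le_div_sq hqtend ht
  have hqε : Tendsto (fun n => (qn n : ℝ) * (M * |t n|)) atTop (𝓝 0) := by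
    simpa [mul_left_comm] using hqt.const_mul M
  have hsmall : ∀ᶠ n in atTop, |t n| ≤ δ ∧ (qn n : ℝ) * (M * |t n|) ≤ τ'' - τ' := by
    filter_upwards [hqtend.eventually_ge_atTop 1, hqt.eventually (ge_mem_nhds hδ),
      hqε.eventually (ge_mem_nhds (sub_pos.2 hτ'τ''))] with n hq1 hqδ hqτ
    exact ⟨le_trans (le_mul_of_one_le_left (abs_nonneg _) (by exact_mod_cast hq1)) hqδ, hqτ⟩
  have hiter : ∀ᶠ n in atTop, ∀ k ≤ qn n, ∀ w ∈ Strip τ',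
      ‖(fun w : ℂ => Φc (Fc (Ψ w) + ((t n : ℝ) : ℂ)))^[k] w - w - k * θ‖ ≤
        (qn n : ℝ) * (M * |t n|) := by
    filter_upwards [hsmall] with n ⟨htδ, hqτ⟩ k hk w hw
    have hkq : (k : ℝ) * (M * |t n|) ≤ qn n * (M * |t n|) := by gcongr
    exact (norm_iterate_sub_le (by positivity) (hH (t n) htδ) hw k (hkq.trans hqτ)).trans hkq
  obtain ⟨N, hN⟩ := eventually_atTop.1 (hsmall.and hiter)
  refine ⟨⟨N, fun n hn k hk w hw => ?_⟩, tendstoUniformlyOn_zero_of_norm_le hqε ?_⟩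
  · obtain ⟨⟨-, hqτ⟩, hbound⟩ := hN n hn
    exact strip_mono (by linarith) (mem_strip_add_of_norm_sub_le (by simp) hw (hbound k hk w hw))
  · filter_upwards [hiter] with n hn w hw
    exact hn _ le_rfl w hw

/-- Lemma 3 of the paper: with `t_n ∈ I(p_n/q_n)` and
`H_n = Φ_F ∘ F_{t_n} ∘ Ψ_F` on `S(τ')`, for all large `n` the iterates
`H_n^{∘k}`, `k ≤ q_n`, are defined on `S(τ')` with values in `S(τ)`, and
`sup_{w ∈ S(τ')} |H_n^{∘q_n}(w) - w - q_n θ| → 0`. -/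
theorem conjugated_iterates_defined_and_close_to_translation
    (F : ℝ → ℝ)
    (hFanal : ∀ x : ℝ, AnalyticAt ℝ F x)
    (hFmono : StrictMono F)
    (hFbij : Function.Bijective F)
    (hFderiv : ∀ x : ℝ, 0 < deriv F x)
    (hFper : ∀ x : ℝ, F (x + 1) = F x + 1)
    -- translation numbers of the translated family `F_t = F + t`
    (T : ℝ → ℝ)
    (hT : ∀ t x : ℝ, Tendsto (fun n : ℕ => ((fun y => F y + t)^[n] x - x) / n)
      atTop (𝓝 (T t)))
    (θ : ℝ) (hθ : T 0 = θ) (hirr : Irrational θ)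
    -- Herman strip of modulus `2τ`
    (τ : ℝ) (hτ : 0 < τ)
    (Φ : ℝ → ℝ) (hΦmono : StrictMono Φ)
    (hΦper : ∀ x : ℝ, Φ (x + 1) = Φ x + 1)
    (hΦconj : ∀ x : ℝ, Φ (F x) = Φ x + θ)
    (Ψ : ℂ → ℂ)
    (hΨΦ : ∀ x : ℝ, Ψ ((Φ x : ℝ) : ℂ) = (x : ℂ))
    (hΨdiff : DifferentiableOn ℂ Ψ (Strip τ))
    (hΨinj : Set.InjOn Ψ (Strip τ))
    (hΨper : ∀ z ∈ Strip τ, Ψ (z + 1) = Ψ z + 1)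
    -- the complex extension `Φc` of `Φ_F`, inverse of `Ψ` on the Herman strip
    (Φc : ℂ → ℂ)
    (hΦcreal : ∀ x : ℝ, Φc (x : ℂ) = ((Φ x : ℝ) : ℂ))
    (hΦcΨ : ∀ z ∈ Strip τ, Φc (Ψ z) = z)
    (Fc : ℂ → ℂ)
    (hFcreal : ∀ x : ℝ, Fc (x : ℂ) = ((F x : ℝ) : ℂ))
    (hFcdiff : DifferentiableOn ℂ Fc (Ψ '' Strip τ))
    (hFcper : ∀ z ∈ Ψ '' Strip τ, Fc (z + 1) = Fc z + 1)
    (hFclin : ∀ z ∈ Strip τ, Fc (Ψ z) = Ψ (z + (θ : ℂ)))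
    -- `τ' < τ'' < τ`
    (τ' τ'' : ℝ) (hτ'pos : 0 < τ') (hτ'τ'' : τ' < τ'') (hτ''τ : τ'' < τ)
    -- continued fraction convergents `p_n/q_n` of `θ`
    (pn : ℕ → ℤ) (qn : ℕ → ℕ)
    (hqpos : ∀ n, 0 < qn n)
    (hqtend : Tendsto qn atTop atTop)
    (hcop : ∀ n, Nat.Coprime (pn n).natAbs (qn n))
    (hconv : ∀ n, |θ - (pn n : ℝ) / (qn n : ℝ)| ≤ 1 / (qn n : ℝ) ^ 2)
    -- parameters `t_n ∈ I(p_n/q_n)`, with the bound coming from Herman's theorem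
    (t : ℕ → ℝ) (ht : ∀ n, T (t n) = (pn n : ℝ) / (qn n : ℝ))
    (C₃ : ℝ) (hC₃ : 0 < C₃)
    (htbound : ∀ n, |t n| ≤ C₃ * |θ - (pn n : ℝ) / (qn n : ℝ)|) :
    (∃ N : ℕ, ∀ n ≥ N, ∀ k ≤ qn n,
      Set.MapsTo ((fun w : ℂ => Φc (Fc (Ψ w) + ((t n : ℝ) : ℂ)))^[k])
        (Strip τ') (Strip τ))
    ∧ TendstoUniformlyOn
        (fun n w => (fun w : ℂ => Φc (Fc (Ψ w) + ((t n : ℝ) : ℂ)))^[qn n] w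
          - w - (qn n : ℂ) * (θ : ℂ))
        (fun _ => 0) atTop (Strip τ') :=
  conjugated_iterates_defined_and_close_to_translation_general θ hirr τ hτ Ψ hΨdiff hΨper Φc hΦcΨ Fc
    hFcdiff hFclin τ' τ'' hτ'τ'' hτ''τ pn qn hqtend hconv t C₃ hC₃ htbound
end
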